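/- arXiv:2103.03696 — 9 statements merged into one kernel-verified Lean document; each statement's English description precedes it below -/
import Mathlib

section
/- Let Γ be a group and let K be a subgroup of the group of permutations of Γ which is normalized by left translations, i.e. for every γ ∈ Γ and every k ∈ K, the permutation x ↦ γ·k(γ⁻¹·x) belongs to K. If the K-orbit O of the identity element 1 is finite, then O is a (finite) subgroup of Γ, and moreover for every γ ∈ Γ the K-orbit of γ equals γ·O. -/
/-- Let `Γ` be a group and `K` a subgroup of `Perm Γ` normalized by left translations
(for every `γ ∈ Γ` and `k ∈ K`, the permutation `x ↦ γ * k (γ⁻¹ * x)` lies in `K`).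
If the `K`-orbit `O` of the identity is finite, then `O` is a subgroup of `Γ`, and for
every `γ ∈ Γ` the `K`-orbit of `γ` equals the left coset `γ * O`. -/
theorem stmt1 {Γ : Type*} [Group Γ] (K : Subgroup (Equiv.Perm Γ))
    (hK : ∀ γ : Γ, ∀ k ∈ K,
      (Equiv.mulLeft γ⁻¹).trans (k.trans (Equiv.mulLeft γ)) ∈ K)
    (hfin : {x : Γ | ∃ k ∈ K, k 1 = x}.Finite) :
    ∃ H : Subgroup Γ, (H : Set Γ) = {x : Γ | ∃ k ∈ K, k 1 = x} ∧
      ∀ γ : Γ, {x : Γ | ∃ k ∈ K, k γ = x} = (γ * ·) '' {x : Γ | ∃ k ∈ K, k 1 = x} := by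
  set S : Set Γ := {x : Γ | ∃ k ∈ K, k 1 = x} with hS
  -- coset lemma
  have coset : ∀ γ : Γ, {x : Γ | ∃ k ∈ K, k γ = x} = (γ * ·) '' S := by
    intro γ
    ext x
    constructor
    · rintro ⟨k, hk, rfl⟩
      have h := hK γ⁻¹ k hk
      rw [inv_inv] at h
      refine ⟨γ⁻¹ * k γ, ⟨_, h, ?_⟩, by group⟩
      simp
    · rintro ⟨y, ⟨k, hk, rfl⟩, rfl⟩
      have h := hK γ k hk
      exact ⟨_, h, by simp⟩
  -- orbit of an element of S equals S
  have orbEq : ∀ a ∈ S, {x : Γ | ∃ k ∈ K, k a = x} = S := by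
    rintro a ⟨k0, hk0, rfl⟩
    ext x
    constructor
    · rintro ⟨k, hk, rfl⟩
      exact ⟨k * k0, mul_mem hk hk0, rfl⟩
    · rintro ⟨k, hk, rfl⟩
      refine ⟨k * k0⁻¹, mul_mem hk (inv_mem hk0), ?_⟩
      simp [Equiv.Perm.mul_apply]
  have one_mem : (1 : Γ) ∈ S := ⟨1, one_mem K, rfl⟩
  have mul_mem' : ∀ {a b : Γ}, a ∈ S → b ∈ S → a * b ∈ S := by
    intro a b ha hb
    have : a * b ∈ (a * ·) '' S := ⟨b, hb, rfl⟩
    rwa [← coset a, orbEq a ha] at this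
  have inv_mem' : ∀ {a : Γ}, a ∈ S → a⁻¹ ∈ S := by
    intro a ha
    have h1 : (1 : Γ) ∈ (a * ·) '' S := by rw [← coset a, orbEq a ha]; exact one_mem
    obtain ⟨x, hx, hax⟩ := h1
    have : a⁻¹ = x := by exact inv_eq_of_mul_eq_one_right hax
    rwa [this]
  exact ⟨{ carrier := S, one_mem' := one_mem, mul_mem' := mul_mem', inv_mem' := inv_mem' },
    rfl, coset⟩
end

section
/- Let Γ be a torsion-free group and let K be a subgroup of the permutation group of Γ normalized by all left translations (for every γ ∈ Γ and k ∈ K, the permutation x ↦ γ·k(γ⁻¹·x) lies in K). If the K-orbit of the identity element of Γ is finite, then K consists only of the identity permutation. -/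
/-!
The `K`-orbit of `1` is closed under multiplication: if `k 1 = a` and `g 1 = b`, then the
translate `x ↦ a * g (a⁻¹ * x)` of `g` composed with `k` sends `1` to `a * b`. A finite submonoid
of a group consists of elements of finite order, so in a torsion-free group the orbit is `{1}`.
Finally, if `k ∈ K` then its translate by `x⁻¹` also fixes `1`, which says exactly `k x = x`.
-/

section TranslationNormalized

variable {Γ : Type*} [Group Γ]

def NormalizedByMulLeft (K : Subgroup (Equiv.Perm Γ)) : Prop :=
  ∀ γ : Γ, ∀ k ∈ K, (Equiv.mulLeft γ⁻¹).trans (k.trans (Equiv.mulLeft γ)) ∈ K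

def orbitOneSubmonoid (K : Subgroup (Equiv.Perm Γ)) (hK : NormalizedByMulLeft K) :
    Submonoid Γ where
  carrier := {x | ∃ k ∈ K, k 1 = x}
  one_mem' := ⟨1, K.one_mem, rfl⟩
  mul_mem' := by
    rintro _ _ ⟨k, hk, rfl⟩ ⟨g, hg, rfl⟩
    refine ⟨(Equiv.mulLeft (k 1)⁻¹).trans (g.trans (Equiv.mulLeft (k 1))) * k,
      K.mul_mem (hK _ g hg) hk, ?_⟩
    simp

theorem isOfFinOrder_of_mem_orbitOneSubmonoid {K : Subgroup (Equiv.Perm Γ)}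
    {hK : NormalizedByMulLeft K} (hfin : (orbitOneSubmonoid K hK : Set Γ).Finite) {a : Γ}
    (ha : a ∈ orbitOneSubmonoid K hK) :
    IsOfFinOrder a :=
  finite_powers.mp (hfin.subset (Submonoid.powers_le.mpr ha))

theorem eq_bot_of_forall_apply_one_eq_one {K : Subgroup (Equiv.Perm Γ)}
    (hK : NormalizedByMulLeft K) (h : ∀ k ∈ K, k 1 = 1) : K = ⊥ := by
  refine (Subgroup.eq_bot_iff_forall K).mpr fun k hk ↦ Equiv.Perm.ext fun x ↦ ?_
  have hx : x⁻¹ * k x = 1 := by simpa using h _ (hK x⁻¹ k hk)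
  exact inv_mul_eq_one.mp hx |>.symm

end TranslationNormalized

/-- Let `Γ` be a torsion-free group and `K` a subgroup of `Perm Γ` normalized by all
left translations. If the `K`-orbit of the identity of `Γ` is finite, then `K` is
trivial. -/
theorem stmt2 {Γ : Type*} [Group Γ] (htf : ∀ g : Γ, g ≠ 1 → ¬IsOfFinOrder g)
    (K : Subgroup (Equiv.Perm Γ))
    (hK : ∀ γ : Γ, ∀ k ∈ K,
      (Equiv.mulLeft γ⁻¹).trans (k.trans (Equiv.mulLeft γ)) ∈ K)
    (hfin : {x : Γ | ∃ k ∈ K, k 1 = x}.Finite) :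
    K = ⊥ :=
  eq_bot_of_forall_apply_one_eq_one hK fun k hk ↦ by_contra fun hk1 ↦
    htf _ hk1 (isOfFinOrder_of_mem_orbitOneSubmonoid (hK := hK) hfin ⟨k, hk, rfl⟩)
end

section
/- Let Γ be a countable group which is ICC (every nontrivial element has an infinite conjugacy class), let Γ₁ ≤ Γ be a subgroup of finite index, and let μ be a probability measure on the discrete space Γ which is invariant under conjugation by every element of Γ₁, i.e. μ({γgγ⁻¹}) = μ({g}) for all γ ∈ Γ₁ and g ∈ Γ. Then μ is the Dirac mass at the identity: μ({1}) = 1. -/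
/-!
Conjugation by `Γ₁` preserves the masses of points, so every point of a `Γ₁`-conjugation orbit
has the same mass. For `g ≠ 1` this orbit is infinite: the full conjugacy class of `g` is
infinite, and it is covered by the finitely many translates `r • O` of the `Γ₁`-orbit `O`, `r`
running over representatives of `Γ ⧸ Γ₁`. Infinitely many points of equal mass in a finite
measure must have mass zero, and since `Γ` is countable, all the mass sits at `1`.
-/

open MeasureTheory MulAction

theorem MulAction.infinite_orbit_subgroup_of_finiteIndex {G X : Type*} [Group G] [MulAction G X]
    (H : Subgroup G) [H.FiniteIndex] {x : X} (hx : (orbit G x).Infinite) :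
    (orbit H x).Infinite := by
  intro hfin
  have : Finite (G ⧸ H) := H.finite_quotient_of_finiteIndex
  refine hx ((Set.finite_iUnion fun q : G ⧸ H ↦ hfin.smul_set (a := q.out)).subset ?_)
  rintro _ ⟨g, rfl⟩
  obtain ⟨h, hh⟩ := QuotientGroup.mk_out_eq_mul H g
  refine Set.mem_iUnion.2 ⟨(g : G ⧸ H), h⁻¹ • x, mem_orbit x h⁻¹, ?_⟩
  simp [hh, Subgroup.smul_def, smul_smul]

theorem measure_singleton_eq_zero_of_infinite_orbit {G X : Type*} [Group G] [MulAction G X]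
    [MeasurableSpace X] [MeasurableSingletonClass X] {μ : Measure X} [IsFiniteMeasure μ]
    (hμ : ∀ (g : G) (y : X), μ {g • y} = μ {y}) {x : X} (hx : (orbit G x).Infinite) :
    μ {x} = 0 := by
  by_contra h0
  refine measure_ne_top μ _ (hx.meas_eq_top ⟨μ {x}, h0, ?_⟩)
  rintro _ ⟨g, rfl⟩
  exact (hμ g x).ge

theorem ConjAct.orbit_eq_setOf_conj {G : Type*} [Group G] (g : G) :
    orbit (ConjAct G) g = {h : G | ∃ x : G, x * g * x⁻¹ = h} := by
  ext h
  simp only [mem_orbit_iff, ConjAct.smul_def, Set.mem_ofPred_eq]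
  exact ConjAct.ofConjAct.surjective.exists

/-- Let `Γ` be a countable ICC group (every nontrivial element has an infinite conjugacy
class), `Γ₁` a finite-index subgroup, and `μ` a probability measure on the discrete space
`Γ` which is invariant under conjugation by every element of `Γ₁`. Then `μ` is the Dirac
mass at the identity: `μ {1} = 1`. -/
theorem stmt4 {Γ : Type*} [Group Γ] [Countable Γ]
    [MeasurableSpace Γ] [MeasurableSingletonClass Γ]
    (hICC : ∀ g : Γ, g ≠ 1 → {h : Γ | ∃ x : Γ, x * g * x⁻¹ = h}.Infinite)
    (Γ₁ : Subgroup Γ) [Γ₁.FiniteIndex]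
    (μ : MeasureTheory.Measure Γ) [MeasureTheory.IsProbabilityMeasure μ]
    (hinv : ∀ γ ∈ Γ₁, ∀ g : Γ, μ {γ * g * γ⁻¹} = μ {g}) :
    μ {1} = 1 := by
  let H : Subgroup (ConjAct Γ) := Γ₁.comap ConjAct.ofConjAct.toMonoidHom
  have : H.FiniteIndex := ⟨by
    rw [Subgroup.index_comap_of_surjective _ ConjAct.ofConjAct.surjective]
    exact Subgroup.FiniteIndex.index_ne_zero⟩
  have hH : ∀ (γ : H) (g : Γ), μ {γ • g} = μ {g} := fun γ g ↦ hinv _ γ.2 g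
  have hatom : ∀ g ≠ (1 : Γ), μ {g} = 0 := fun g hg ↦
    measure_singleton_eq_zero_of_infinite_orbit hH <| infinite_orbit_subgroup_of_finiteIndex H <|
      (ConjAct.orbit_eq_setOf_conj g).symm ▸ hICC g hg
  rw [← prob_compl_eq_zero_iff (measurableSet_singleton 1),
    measure_null_iff_singleton (Set.to_countable _)]
  exact hatom
end

section
/- Let G and H be simple graphs and let θ : V(G) → V(H) be an injective map preserving adjacency and non-adjacency (θ(u) and θ(v) are adjacent in H if and only if u and v are adjacent in G). Let v ∈ V(G) be a vertex such that (a) the link lk_G(v) contains k pairwise adjacent vertices, and (b) lk_G(v) admits no nontrivial join decomposition. Suppose the link lk_H(θ(v)) decomposes as a join X₁ ⋆ X₂ (its vertex set is partitioned into X₁ ⊔ X₂ with every vertex of X₁ adjacent to every vertex of X₂). Then θ maps lk_G(v) into X₁ or into X₂; in particular X₁ or X₂ contains k pairwise adjacent vertices. -/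
/-- Let `θ : V(G) → V(H)` be an injective map between simple graphs preserving adjacency
and non-adjacency. Let `v` be a vertex of `G` such that its link contains `k` pairwise
adjacent vertices and admits no nontrivial join decomposition. If the link of `θ v` in
`H` decomposes as a join `X₁ ⋆ X₂`, then `θ` maps the link of `v` into `X₁` or into `X₂`;
in particular `X₁` or `X₂` contains `k` pairwise adjacent vertices. -/
theorem stmt7 {V W : Type*} (G : SimpleGraph V) (H : SimpleGraph W)
    (θ : V → W) (hinj : Function.Injective θ)
    (hadj : ∀ u v : V, H.Adj (θ u) (θ v) ↔ G.Adj u v)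
    (v : V) (k : ℕ)
    (hclique : ∃ S : Finset V, ↑S ⊆ G.neighborSet v ∧ S.card = k ∧
      ∀ a ∈ S, ∀ b ∈ S, a ≠ b → G.Adj a b)
    (hnojoin : ¬ ∃ W₁ W₂ : Set V, W₁ ∪ W₂ = G.neighborSet v ∧ Disjoint W₁ W₂ ∧
      W₁.Nonempty ∧ W₂.Nonempty ∧ ∀ a ∈ W₁, ∀ b ∈ W₂, G.Adj a b)
    (X₁ X₂ : Set W) (hdisj : Disjoint X₁ X₂)
    (hcover : X₁ ∪ X₂ = H.neighborSet (θ v))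
    (hjoin : ∀ a ∈ X₁, ∀ b ∈ X₂, H.Adj a b) :
    (θ '' (G.neighborSet v) ⊆ X₁ ∨ θ '' (G.neighborSet v) ⊆ X₂) ∧
    ((∃ S : Finset W, ↑S ⊆ X₁ ∧ S.card = k ∧ ∀ a ∈ S, ∀ b ∈ S, a ≠ b → H.Adj a b) ∨
     (∃ S : Finset W, ↑S ⊆ X₂ ∧ S.card = k ∧ ∀ a ∈ S, ∀ b ∈ S, a ≠ b → H.Adj a b)) := by
  classical
  -- θ maps the link of v into X₁ ∪ X₂
  have hmem : ∀ u ∈ G.neighborSet v, θ u ∈ X₁ ∪ X₂ := by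
    intro u hu
    rw [hcover]
    exact ((H.adj_comm (θ u) (θ v)).mp ((hadj u v).mpr ((G.adj_comm v u).mp hu)))
  set W₁ : Set V := {u | u ∈ G.neighborSet v ∧ θ u ∈ X₁} with hW₁
  set W₂ : Set V := {u | u ∈ G.neighborSet v ∧ θ u ∈ X₂} with hW₂
  have hcov' : W₁ ∪ W₂ = G.neighborSet v := by
    ext u
    constructor
    · rintro (⟨h, _⟩ | ⟨h, _⟩) <;> exact h
    · intro hu
      rcases hmem u hu with h | h
      · exact Or.inl ⟨hu, h⟩
      · exact Or.inr ⟨hu, h⟩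
  have hdisj' : Disjoint W₁ W₂ := by
    rw [Set.disjoint_left]
    rintro u ⟨_, h1⟩ ⟨_, h2⟩
    exact Set.disjoint_left.mp hdisj h1 h2
  have hj : ∀ a ∈ W₁, ∀ b ∈ W₂, G.Adj a b := by
    rintro a ⟨_, ha⟩ b ⟨_, hb⟩
    exact (hadj a b).mp (hjoin _ ha _ hb)
  have hempty : ¬ W₁.Nonempty ∨ ¬ W₂.Nonempty := by
    by_contra h
    push_neg at h
    exact hnojoin ⟨W₁, W₂, hcov', hdisj', h.1, h.2, hj⟩
  have key : θ '' (G.neighborSet v) ⊆ X₁ ∨ θ '' (G.neighborSet v) ⊆ X₂ := by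
    rcases hempty with h | h
    · right
      rintro _ ⟨u, hu, rfl⟩
      rcases hmem u hu with h1 | h2
      · exact absurd ⟨u, hu, h1⟩ h
      · exact h2
    · left
      rintro _ ⟨u, hu, rfl⟩
      rcases hmem u hu with h1 | h2
      · exact h1
      · exact absurd ⟨u, hu, h2⟩ h
  refine ⟨key, ?_⟩
  obtain ⟨S, hS, hcard, hScl⟩ := hclique
  have himg : ∀ (X : Set W), θ '' (G.neighborSet v) ⊆ X →
      ∃ T : Finset W, ↑T ⊆ X ∧ T.card = k ∧ ∀ a ∈ T, ∀ b ∈ T, a ≠ b → H.Adj a b := by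
    intro X hX
    refine ⟨S.image θ, ?_, ?_, ?_⟩
    · intro w hw
      simp only [Finset.coe_image] at hw
      rcases hw with ⟨u, hu, rfl⟩
      exact hX ⟨u, hS hu, rfl⟩
    · rw [Finset.card_image_of_injective _ hinj, hcard]
    · intro a ha b hb hab
      simp only [Finset.mem_image] at ha hb
      obtain ⟨a', ha', rfl⟩ := ha
      obtain ⟨b', hb', rfl⟩ := hb
      exact (hadj a' b').mpr (hScl a' ha' b' hb' (fun h => hab (by rw [h])))
  rcases key with h | h
  · exact Or.inl (himg X₁ h)
  · exact Or.inr (himg X₂ h)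
end

section
/- Let A be a group, let G = A ∗ ℤ be the free product of A with an infinite cyclic group, let ι : A → G be the canonical inclusion, and let t ∈ G be the image of a generator of the ℤ factor. Then there is an injective group homomorphism Φ : A × A → Aut(G) such that for every (a, b) ∈ A × A, the automorphism Φ(a,b) fixes ι(A) pointwise and satisfies Φ(a,b)(t) = ι(a)⁻¹ · t · ι(b). -/
open Monoid Multiplicative

namespace Stmt9Aux

variable {A : Type*} [Group A]

local notation "G" => Monoid.Coprod A (Multiplicative ℤ)

/-- The stable letter. -/
noncomputable def t : Monoid.Coprod A (Multiplicative ℤ) :=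
  Monoid.Coprod.inr (Multiplicative.ofAdd (1 : ℤ))

/-- The twist endomorphism. -/
noncomputable def f (p : A × A) : G →* G :=
  Monoid.Coprod.lift Monoid.Coprod.inl
    (zpowersHom _ ((Monoid.Coprod.inl p.1)⁻¹ * t * Monoid.Coprod.inl p.2))

@[simp] lemma f_inl (p : A × A) (c : A) : f p (Monoid.Coprod.inl c) = Monoid.Coprod.inl c := by
  simp [f]

@[simp] lemma f_t (p : A × A) :
    f p t = (Monoid.Coprod.inl p.1)⁻¹ * t * Monoid.Coprod.inl p.2 := by
  simp [f, t]

lemma f_comp (p q : A × A) : (f p).comp (f q) = f (p * q) := by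
  apply Monoid.Coprod.hom_ext
  · ext c; simp
  · apply MonoidHom.ext_mint
    show f p (f q t) = f (p * q) t
    simp [mul_assoc]

lemma f_one : f (1 : A × A) = MonoidHom.id G := by
  apply Monoid.Coprod.hom_ext
  · ext c; simp
  · apply MonoidHom.ext_mint
    show f 1 t = t
    simp

/-- The twist automorphism. -/
noncomputable def e (p : A × A) : MulAut G where
  toFun := f p
  invFun := f p⁻¹
  left_inv x := by
    have : (f p⁻¹).comp (f p) = MonoidHom.id G := by rw [f_comp, inv_mul_cancel, f_one]
    exact DFunLike.congr_fun this x
  right_inv x := by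
    have : (f p).comp (f p⁻¹) = MonoidHom.id G := by rw [f_comp, mul_inv_cancel, f_one]
    exact DFunLike.congr_fun this x
  map_mul' := (f p).map_mul

/-- The homomorphism `A × A →* Aut G`. -/
noncomputable def Phi : A × A →* MulAut G where
  toFun := e
  map_one' := by
    ext x
    show f 1 x = x
    rw [f_one]; rfl
  map_mul' p q := by
    ext x
    show f (p * q) x = f p (f q x)
    rw [← f_comp]; rfl

/-- Separating representation: `G` acts on `A × A`. -/
noncomputable def mu : A →* Equiv.Perm (A × A) where
  toFun c := Equiv.prodCongr (Equiv.mulLeft c) (Equiv.refl A)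
  map_one' := by ext x <;> simp
  map_mul' a b := by ext x <;> simp [mul_assoc]

noncomputable def pi : G →* Equiv.Perm (A × A) :=
  Monoid.Coprod.lift mu (zpowersHom _ (Equiv.prodComm A A))

lemma pi_eval (p : A × A) :
    pi ((Monoid.Coprod.inl p.1)⁻¹ * t * Monoid.Coprod.inl p.2) ((1 : A), (1 : A))
      = (p.1⁻¹, p.2) := by
  simp [pi, t, mu, Equiv.Perm.mul_apply, Equiv.Perm.inv_def, Prod.swap, Prod.map]

lemma Phi_injective : Function.Injective (Phi (A := A)) := by
  intro p q h
  have ht : f p t = f q t := congrArg (fun φ : MulAut G => φ t) h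
  have ht' : pi (f p t) ((1 : A), (1 : A)) = pi (f q t) ((1 : A), (1 : A)) := by rw [ht]
  rw [f_t, f_t, pi_eval, pi_eval] at ht'
  simp only [Prod.mk.injEq, inv_inj] at ht'
  exact Prod.ext_iff.mpr ⟨ht'.1, ht'.2⟩

end Stmt9Aux

/-- Let `A` be a group and `G = A ∗ ℤ` the free product of `A` with an infinite cyclic
group, with canonical inclusion `ι : A → G` and stable letter `t` (the image of the
generator of `ℤ`). Then there is an injective group homomorphism `Φ : A × A → Aut G`
such that `Φ (a, b)` fixes `ι(A)` pointwise and sends `t` to `ι(a)⁻¹ * t * ι(b)`. -/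
theorem stmt9 {A : Type*} [Group A] :
    ∃ Φ : A × A →* MulAut (Monoid.Coprod A (Multiplicative ℤ)),
      Function.Injective Φ ∧
      ∀ a b : A,
        (∀ c : A, Φ (a, b) (Monoid.Coprod.inl c) = Monoid.Coprod.inl c) ∧
        Φ (a, b) (Monoid.Coprod.inr (Multiplicative.ofAdd (1 : ℤ))) =
          (Monoid.Coprod.inl a)⁻¹ *
            Monoid.Coprod.inr (Multiplicative.ofAdd (1 : ℤ)) * Monoid.Coprod.inl b := by
  refine ⟨Stmt9Aux.Phi, Stmt9Aux.Phi_injective, fun a b => ⟨fun c => ?_, ?_⟩⟩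
  · exact Stmt9Aux.f_inl (a, b) c
  · exact Stmt9Aux.f_t (a, b)
end

section
/- Let A and B be groups and let G = A ∗ B be their free product, with canonical inclusions ι_A : A → G and ι_B : B → G. Then: (1) for every g ∈ G not lying in ι_A(A), the intersection ι_A(A) ∩ g·ι_A(A)·g⁻¹ is trivial (so ι_A(A) is a malnormal subgroup of G); and (2) for every g ∈ G, the intersection ι_A(A) ∩ g·ι_B(B)·g⁻¹ is trivial. -/
/-!
If `a * g = g * a'` with `a ≠ 1` in a factor `Gᵢ` of a free product, then `g ∈ Gᵢ`, by induction
on the length of the reduced word of `g`. A first or last letter of `g` lying in `Gᵢ` is absorbed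
into `a` or `a'` by conjugation, which shortens `g`. Otherwise `a * g * a'⁻¹` is itself a reduced
word, starting in `Gᵢ`, while the reduced word of `g` does not: this contradicts the uniqueness of
reduced words. `A ∗ B` embeds in the free product of the family `Bool → {A, B}`, and the claim
about `ι_A(A)` and a conjugate of `ι_B(B)` follows by applying the retraction `A ∗ B → A`, which
kills `B`.
-/

open Monoid

theorem Subgroup.inf_map_conj_eq_bot {G : Type*} [Group G] {H K : Subgroup G} {g : G}
    (h : ∀ a ∈ H, ∀ b ∈ K, a * g = g * b → a = 1) :
    H ⊓ K.map (MulAut.conj g).toMonoidHom = ⊥ := by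
  rw [eq_bot_iff]
  rintro _ ⟨hx, b, hb, rfl⟩
  exact h _ hx b hb (by simp)

namespace Monoid.CoprodI

variable {ι : Type*}

section Group

variable {G : ι → Type*} [∀ i, Group (G i)]

theorem NeWord.length_toList_inv {i j : ι} (w : NeWord G i j) :
    w.inv.toList.length = w.toList.length := by
  induction w with
  | singleton => rfl
  | append w₁ _ w₂ ih₁ ih₂ =>
    simp only [NeWord.inv, NeWord.toList, List.length_append, ih₁, ih₂, Nat.add_comm]

theorem Word.exists_prod_eq_inv (w : Word G) :
    ∃ w' : Word G, w'.prod = w.prod⁻¹ ∧ w'.toList.length = w.toList.length := by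
  rcases eq_or_ne w Word.empty with rfl | hw
  · exact ⟨Word.empty, by simp [Word.prod_empty], rfl⟩
  obtain ⟨i, j, w, rfl⟩ := NeWord.of_word w hw
  exact ⟨w.inv.toWord, w.inv_prod, w.length_toList_inv⟩

end Group

variable [DecidableEq ι]

section Monoid

variable {M : ι → Type*} [∀ i, Monoid (M i)] [∀ i, DecidableEq (M i)]

theorem Word.exists_prod_eq_of_mul_prod {i : ι} (w : Word M) (hw : w.fstIdx = some i) :
    ∃ (m : M i) (w' : Word M), w.prod = of m * w'.prod ∧ w'.toList.length < w.toList.length := by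
  set p := Word.equivPair i w
  have hrcons : Word.rcons p = w := (Word.equivPair i).symm_apply_apply w
  have hhead : p.head ≠ 1 := by
    intro h1
    rw [Word.rcons, dif_pos h1] at hrcons
    exact p.fstIdx_ne (hrcons ▸ hw)
  refine ⟨p.head, p.tail, by rw [← hrcons, Word.prod_rcons], ?_⟩
  rw [← hrcons, Word.rcons, dif_neg hhead]
  simp [Word.cons]

theorem NeWord.index_eq_of_prod_eq {i j k l : ι} (w₁ : NeWord M i j) (w₂ : NeWord M k l)
    (h : w₁.prod = w₂.prod) : i = k := by
  have := congrArg (fun w : Word M => w.toList.head?) (Word.equiv.symm.injective h)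
  simp only [NeWord.toWord, NeWord.toList_head?, Option.some.injEq] at this
  exact (Sigma.mk.inj_iff.mp this).1

theorem NeWord.exists_prod_eq_of_mul_prod {i j : ι} (w : NeWord M i j) :
    ∃ (m : M i) (w' : Word M), w.prod = of m * w'.prod ∧ w'.toList.length < w.toList.length :=
  w.toWord.exists_prod_eq_of_mul_prod (by simp [Word.fstIdx, NeWord.toWord])

end Monoid

variable {G : ι → Type*} [∀ i, Group (G i)] [∀ i, DecidableEq (G i)]

theorem NeWord.exists_prod_eq_prod_mul_of {i j : ι} (w : NeWord G i j) :
    ∃ (m : G j) (w' : Word G), w.prod = w'.prod * of m ∧ w'.toList.length < w.toList.length := by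
  obtain ⟨m, w', hprod, hlt⟩ := w.inv.exists_prod_eq_of_mul_prod
  obtain ⟨w'', hinv, hlen⟩ := w'.exists_prod_eq_inv
  refine ⟨m⁻¹, w'', ?_, by rwa [hlen, ← w.length_toList_inv]⟩
  rw [hinv, map_inv, ← mul_inv_rev, ← hprod, NeWord.inv_prod, inv_inv]

theorem NeWord.of_mul_prod_ne_prod_mul_of {i j k : ι} (w : NeWord G j k) (hj : j ≠ i)
    (hk : k ≠ i) {a a' : G i} (ha : a ≠ 1) : of a * w.prod ≠ w.prod * of a' := by
  intro h
  rcases eq_or_ne a' 1 with rfl | ha'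
  · rw [map_one, mul_one, mul_eq_right, map_eq_one_iff _ (of_injective i)] at h
    exact ha h
  let u := (NeWord.singleton a ha).append hj.symm
    (w.append hk (NeWord.singleton a'⁻¹ (inv_ne_one.mpr ha')))
  have hu : u.prod = w.prod := by
    simp only [u, NeWord.append_prod, NeWord.prod_singleton, ← mul_assoc, h, map_inv,
      mul_inv_cancel_right]
  exact hj (NeWord.index_eq_of_prod_eq u w hu).symm

theorem Word.prod_mem_range_of_of_mul_prod_eq {i : ι} {a a' : G i} (ha : a ≠ 1) (w : Word G)
    (h : of a * w.prod = w.prod * of a') : w.prod ∈ (of : G i →* CoprodI G).range := by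
  induction hn : w.toList.length using Nat.strong_induction_on generalizing w a a' with
  | _ n ih =>
  rcases eq_or_ne w Word.empty with rfl | hw
  · exact Word.prod_empty (M := G) ▸ one_mem _
  obtain ⟨j, k, w, rfl⟩ := NeWord.of_word w hw
  change of a * w.prod = w.prod * of a' at h
  change w.prod ∈ _
  by_cases hj : j = i
  · subst hj
    obtain ⟨m, w', hprod, hlt⟩ := w.exists_prod_eq_of_mul_prod
    rw [hprod] at h ⊢
    have hconj : m⁻¹ * a * m ≠ 1 := by rwa [Ne, mul_eq_one_iff_eq_inv, mul_eq_left]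
    refine mul_mem ⟨m, rfl⟩ (ih _ (hn ▸ hlt) hconj w' (a' := a') ?_ rfl)
    rw [map_mul, map_mul, map_inv, mul_assoc, mul_assoc, h, mul_assoc, inv_mul_cancel_left]
  by_cases hk : k = i
  · subst hk
    obtain ⟨m, w', hprod, hlt⟩ := w.exists_prod_eq_prod_mul_of
    rw [hprod] at h ⊢
    refine mul_mem (ih _ (hn ▸ hlt) ha w' (a' := m * a' * m⁻¹) ?_ rfl) ⟨m, rfl⟩
    simp only [map_mul, map_inv, ← mul_assoc]
    rw [← h, ← mul_assoc, mul_inv_cancel_right]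
  exact absurd h (w.of_mul_prod_ne_prod_mul_of hj hk ha)

theorem mem_range_of_of_mul_eq_mul_of {i : ι} {a a' : G i} (ha : a ≠ 1) {g : CoprodI G}
    (h : of a * g = g * of a') : g ∈ (of : G i →* CoprodI G).range := by
  rw [← Word.equiv.symm_apply_apply g] at h ⊢
  exact Word.prod_mem_range_of_of_mul_prod_eq ha _ h

end Monoid.CoprodI

namespace Monoid.Coprod

universe u v

variable (A : Type u) (B : Type v) [Group A] [Group B]

abbrev BoolFamily : Bool → Type (max u v) := fun b => cond b (ULift.{v} A) (ULift.{u} B)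

instance (b : Bool) : Group (BoolFamily A B b) := by
  cases b
  exacts [inferInstanceAs (Group (ULift B)), inferInstanceAs (Group (ULift A))]

variable {A B}

def toCoprodI : A ∗ B →* CoprodI (BoolFamily A B) :=
  lift ((CoprodI.of (i := true)).comp MulEquiv.ulift.symm.toMonoidHom)
    ((CoprodI.of (i := false)).comp MulEquiv.ulift.symm.toMonoidHom)

def ofCoprodI : CoprodI (BoolFamily A B) →* A ∗ B :=
  CoprodI.lift fun b => match b with
    | true => inl.comp MulEquiv.ulift.toMonoidHom
    | false => inr.comp MulEquiv.ulift.toMonoidHom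

theorem toCoprodI_inl (a : A) :
    toCoprodI (inl a : A ∗ B) = CoprodI.of (M := BoolFamily A B) (i := true) (ULift.up a) :=
  rfl

theorem ofCoprodI_of_true (a : ULift A) :
    ofCoprodI (CoprodI.of (M := BoolFamily A B) (i := true) a) = inl a.down :=
  CoprodI.lift_of (M := BoolFamily A B) (i := true) _ a

theorem ofCoprodI_of_false (b : ULift B) :
    ofCoprodI (CoprodI.of (M := BoolFamily A B) (i := false) b) = inr b.down :=
  CoprodI.lift_of (M := BoolFamily A B) (i := false) _ b

theorem ofCoprodI_toCoprodI (g : A ∗ B) : ofCoprodI (toCoprodI g) = g := by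
  induction g using Coprod.induction_on with
  | inl a => exact ofCoprodI_of_true _
  | inr b => exact ofCoprodI_of_false _
  | mul x y hx hy => rw [map_mul, map_mul, hx, hy]

theorem mem_range_inl_of_inl_mul_eq_mul_inl {a a' : A} (ha : a ≠ 1) {g : A ∗ B}
    (h : inl a * g = g * inl a') : g ∈ (inl : A →* A ∗ B).range := by
  classical
  have h' := congrArg toCoprodI h
  rw [map_mul, map_mul, toCoprodI_inl, toCoprodI_inl] at h'
  obtain ⟨c, hc⟩ := CoprodI.mem_range_of_of_mul_eq_mul_of (G := BoolFamily A B)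
    (fun h => ha (congrArg ULift.down h)) h'
  refine ⟨c.down, ?_⟩
  rw [← ofCoprodI_of_true, hc, ofCoprodI_toCoprodI]

end Monoid.Coprod

/-- Let `G = A ∗ B` be a free product with canonical inclusions `ι_A, ι_B`. Then:
(1) for every `g ∈ G` not in `ι_A(A)`, the intersection `ι_A(A) ∩ g ι_A(A) g⁻¹` is
trivial (so `ι_A(A)` is malnormal in `G`); and (2) for every `g ∈ G`, the intersection
`ι_A(A) ∩ g ι_B(B) g⁻¹` is trivial. -/
theorem stmt10 {A B : Type*} [Group A] [Group B] :
    (∀ g : Monoid.Coprod A B,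
       g ∉ (Monoid.Coprod.inl : A →* Monoid.Coprod A B).range →
       (Monoid.Coprod.inl : A →* Monoid.Coprod A B).range ⊓
         ((Monoid.Coprod.inl : A →* Monoid.Coprod A B).range.map
           (MulAut.conj g).toMonoidHom) = ⊥) ∧
    (∀ g : Monoid.Coprod A B,
       (Monoid.Coprod.inl : A →* Monoid.Coprod A B).range ⊓
         ((Monoid.Coprod.inr : B →* Monoid.Coprod A B).range.map
           (MulAut.conj g).toMonoidHom) = ⊥) := by
  refine ⟨fun g hg => ?_, fun g => ?_⟩ <;> apply Subgroup.inf_map_conj_eq_bot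
  · rintro _ ⟨a, rfl⟩ _ ⟨a', rfl⟩ h
    by_contra ha
    exact hg (Coprod.mem_range_inl_of_inl_mul_eq_mul_inl (by rintro rfl; exact ha (map_one _)) h)
  · rintro _ ⟨a, rfl⟩ _ ⟨b, rfl⟩ h
    rw [show a = 1 by simpa using congrArg Coprod.fst h, map_one]
end

section
/- Let F be a free group, and let g, h ∈ F with g ≠ 1. If g commutes with its conjugate hgh⁻¹, then g commutes with h. -/
/-!
The centralizer of a nontrivial element of a free group is cyclic: by Nielsen–Schreier it is
free, and a free group with a nontrivial central element `z` has at most one generator, because in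
`FreeGroup β` everything commuting with `of i` is a power of `of i` (a reduced-word argument), and
`z` cannot be a nontrivial power of two distinct generators. In particular commuting is transitive
on nontrivial elements.

Let `C(g) = ⟨t⟩`. As `g` commutes with `k = h g h⁻¹ ≠ 1`, transitivity gives
`h C(g) h⁻¹ = C(k) = C(g)`, so conjugation by `h` is an automorphism of `⟨t⟩ ≅ ℤ`, i.e.
`h t h⁻¹ = t ^ (±1)`. Either way `h ^ 2` commutes with `t`, hence so does `h` (by transitivity
through `h ^ 2`, or by torsion-freeness if `h ^ 2 = 1`), and therefore so does `g ∈ ⟨t⟩`.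
-/

open Subgroup

theorem List.eq_replicate_of_cons_eq_append {β : Type*} {p : β} {w : List β}
    (h : p :: w = w ++ [p]) : w = List.replicate w.length p := by
  have : Nonempty β := ⟨p⟩
  obtain ⟨a, ha⟩ := (List.rotate_one_eq_self_iff_eq_replicate (l := p :: w)).mp
    (by rw [List.rotate_cons_succ, List.rotate_zero, h])
  simp only [List.length_cons, List.replicate_succ, List.cons.injEq] at ha
  rw [ha.1]; exact ha.2

namespace FreeGroup
variable {α : Type*}

theorem mk_replicate (p : α × Bool) (n : ℕ) : mk (List.replicate n p) = mk [p] ^ n := by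
  induction n with
  | zero => rfl
  | succ n ih => rw [List.replicate_succ, pow_succ', ← ih, mul_mk]; rfl

theorem inv_mk_singleton (p : α × Bool) : (mk [p])⁻¹ = mk [(p.1, !p.2)] := by
  rw [inv_mk]; rfl

section Words
variable [DecidableEq α]

theorem toWord_mk_singleton_mul (p : α × Bool) (c : FreeGroup α) :
    (mk [p] * c).toWord =
      if c.toWord.head? = some (p.1, !p.2) then c.toWord.tail else p :: c.toWord := by
  rw [toWord_mul, toWord_mk, reduce_singleton, List.singleton_append, reduce.cons,
    reduce_toWord]
  obtain ⟨a, b⟩ := p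
  rcases c.toWord with _ | ⟨⟨a', b'⟩, w⟩
  · rfl
  · simp only [List.head?_cons, Option.some.injEq, Prod.mk.injEq, List.tail_cons]
    cases b <;> cases b' <;> simp [eq_comm]

theorem norm_mk_singleton_mul_lt {p : α × Bool} {c : FreeGroup α}
    (h : c.toWord.head? = some (p.1, !p.2)) : (mk [p] * c).norm < c.norm := by
  rw [norm, norm, toWord_mk_singleton_mul, if_pos h, List.length_tail]
  have : c.toWord ≠ [] := fun h' ↦ by simp [h'] at h
  have := List.length_pos_of_ne_nil this
  omega

theorem mem_zpowers_of_commute_mk_singleton (p : α × Bool) (c : FreeGroup α)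
    (hc : Commute (mk [p]) c) : c ∈ zpowers (mk [p]) := by
  induction hn : c.norm using Nat.strong_induction_on generalizing c with
  | _ n ih =>
  set y := mk [p]
  have hy : y⁻¹ = mk [(p.1, !p.2)] := inv_mk_singleton p
  by_cases hleft : c.toWord.head? = some (p.1, !p.2)
  · have := ih _ (hn ▸ norm_mk_singleton_mul_lt hleft) (y * c)
      ((Commute.refl y).mul_right hc) rfl
    simpa using mul_mem (inv_mem (mem_zpowers y)) this
  by_cases hright : c⁻¹.toWord.head? = some p
  · have hlt : (c * y).norm < n := by
      rw [← hn, ← norm_inv_eq, mul_inv_rev, hy, ← norm_inv_eq (x := c)]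
      exact norm_mk_singleton_mul_lt (by simpa using hright)
    have := ih _ hlt (c * y) (hc.mul_right (Commute.refl y)) rfl
    simpa using mul_mem this (inv_mem (mem_zpowers y))
  -- no cancellation on either side: `p :: w = w ++ [p]` for the reduced word `w` of `c`
  have hyc : (y * c).toWord = p :: c.toWord := by
    rw [toWord_mk_singleton_mul, if_neg hleft]
  have hcy : (c * y).toWord = c.toWord ++ [p] := by
    rw [← inv_inv (c * y), toWord_inv, mul_inv_rev, hy, toWord_mk_singleton_mul,
      if_neg (by simpa using hright), invRev_cons, toWord_inv, invRev_invRev]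
    simp [invRev]
  have hw := List.eq_replicate_of_cons_eq_append (hyc ▸ hcy ▸ congrArg toWord hc.eq)
  rw [← mk_toWord (x := c), hw, mk_replicate]
  exact npow_mem_zpowers y _

end Words

theorem mem_zpowers_of_commute_of {a : α} {c : FreeGroup α} (h : Commute (of a) c) :
    c ∈ zpowers (of a) := by
  classical
  exact mem_zpowers_of_commute_mk_singleton (a, true) c h

theorem eq_of_commute_of_ne_one {i j : α} {z : FreeGroup α} (hz : z ≠ 1)
    (hi : Commute (of i) z) (hj : Commute (of j) z) : i = j := by
  classical
  obtain ⟨k, rfl⟩ := mem_zpowers_iff.mp (mem_zpowers_of_commute_of hi)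
  obtain ⟨l, hl⟩ := mem_zpowers_iff.mp (mem_zpowers_of_commute_of hj)
  by_contra hij
  have := congrArg (lift (Pi.mulSingle i (Multiplicative.ofAdd (1 : ℤ)))) hl
  simp only [map_zpow, lift_apply_of, Pi.mulSingle_eq_same, ne_eq, hij, not_false_eq_true,
    Pi.mulSingle_eq_of_ne', one_zpow, ← ofAdd_zsmul, smul_eq_mul, mul_one] at this
  exact hz (by simp [← ofAdd_eq_one.mp this.symm])

instance [Subsingleton α] : IsCyclic (FreeGroup α) := by
  rcases isEmpty_or_nonempty α with _ | ⟨⟨a⟩⟩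
  · infer_instance
  · have : Unique α := uniqueOfSubsingleton a
    infer_instance

end FreeGroup

namespace IsFreeGroup
variable {G : Type*} [Group G] [IsFreeGroup G]

instance : IsMulTorsionFree G :=
  (toFreeGroup G).injective.isMulTorsionFree (toFreeGroup G).toMonoidHom

theorem isCyclic_of_ne_one_of_forall_commute {z : G} (hz : z ≠ 1) (hcomm : ∀ g, Commute g z) :
    IsCyclic G := by
  let e := toFreeGroup G
  have : Subsingleton (Generators G) := by
    refine ⟨fun i j ↦ FreeGroup.eq_of_commute_of_ne_one (z := e z) (by simpa using hz) ?_ ?_⟩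
    · simpa using (hcomm (e.symm (.of i))).map e
    · simpa using (hcomm (e.symm (.of j))).map e
  exact isCyclic_of_surjective e.symm e.symm.surjective

theorem isCyclic_centralizer {x : G} (hx : x ≠ 1) : IsCyclic (centralizer {x}) :=
  isCyclic_of_ne_one_of_forall_commute (z := ⟨x, mem_centralizer_singleton_iff.mpr rfl⟩)
    (by simpa using hx) fun g ↦ Subtype.ext (mem_centralizer_singleton_iff.mp g.2)

theorem exists_mem_zpowers_iff_commute {x : G} (hx : x ≠ 1) :
    ∃ t : G, ∀ u, u ∈ zpowers t ↔ Commute u x := by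
  obtain ⟨t, ht⟩ := (Subgroup.isCyclic_iff_exists_zpowers_eq_top _).mp (isCyclic_centralizer hx)
  exact ⟨t, fun u ↦ by rw [ht, mem_centralizer_singleton_iff]; rfl⟩

theorem commute_trans {a x b : G} (hx : x ≠ 1) (hax : Commute a x) (hxb : Commute x b) :
    Commute a b := by
  obtain ⟨t, ht⟩ := exists_mem_zpowers_iff_commute hx
  obtain ⟨m, rfl⟩ := mem_zpowers_iff.mp ((ht a).mpr hax)
  obtain ⟨n, rfl⟩ := mem_zpowers_iff.mp ((ht b).mpr hxb.symm)
  exact Commute.zpow_zpow_self t m n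

theorem commute_of_commute_pow {h t : G} {n : ℕ} (hn : n ≠ 0) (hc : Commute (h ^ n) t) :
    Commute h t := by
  rcases eq_or_ne (h ^ n) 1 with h1 | h1
  · rw [(pow_eq_one_iff_left hn).mp h1]
    exact Commute.one_left t
  · exact commute_trans h1 (Commute.self_pow h n) hc

end IsFreeGroup

theorem commute_sq_of_conj_mem_zpowers {G : Type*} [Group G] [IsMulTorsionFree G] {h t : G}
    (ht : t ≠ 1) (h₁ : h * t * h⁻¹ ∈ zpowers t) (h₂ : h⁻¹ * t * h ∈ zpowers t) :
    Commute (h ^ 2) t := by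
  obtain ⟨m, hm⟩ := mem_zpowers_iff.mp h₁
  obtain ⟨n, hn⟩ := mem_zpowers_iff.mp h₂
  have hinj : Function.Injective (t ^ · : ℤ → G) :=
    injective_zpow_iff_not_isOfFinOrder.mpr (by rwa [isOfFinOrder_iff_eq_one])
  have hmn : m * n = 1 := hinj <| by
    calc t ^ (m * n) = h * (t ^ n) * h⁻¹ := by rw [zpow_mul, hm, conj_zpow]
      _ = t ^ (1 : ℤ) := by rw [hn]; group
  have hmm : m * m = 1 := by
    rcases Int.eq_one_or_neg_one_of_mul_eq_one hmn with rfl | rfl <;> rfl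
  calc h ^ 2 * t = h * (h * t * h⁻¹) * h⁻¹ * h ^ 2 := by simp [sq, mul_assoc]
    _ = t * h ^ 2 := by rw [← hm, ← conj_zpow, ← hm, ← zpow_mul, hmm, zpow_one]

/-- In a free group, if `g ≠ 1` commutes with its conjugate `h * g * h⁻¹`, then `g`
commutes with `h`. -/
theorem stmt12 {α : Type*} (g h : FreeGroup α) (hg : g ≠ 1)
    (hc : g * (h * g * h⁻¹) = (h * g * h⁻¹) * g) :
    g * h = h * g := by
  set k := h * g * h⁻¹
  have hk : k ≠ 1 := by simpa [k] using hg
  have hgk : Commute g k := hc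
  obtain ⟨t, ht⟩ := IsFreeGroup.exists_mem_zpowers_iff_commute hg
  have htg : Commute t g := (ht t).mp (mem_zpowers t)
  have ht1 : t ≠ 1 := by
    rintro rfl
    exact hg (by simpa using (ht g).mpr (Commute.refl g))
  have h₁ : h * t * h⁻¹ ∈ zpowers t :=
    (ht _).mpr (IsFreeGroup.commute_trans hk ((Commute.conj_iff h).mpr htg) hgk.symm)
  have h₂ : h⁻¹ * t * h ∈ zpowers t := by
    have htk : Commute t k := IsFreeGroup.commute_trans hg htg hgk
    refine (ht _).mpr ?_
    simpa [k, mul_assoc] using (Commute.conj_iff h⁻¹).mpr htk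
  have hht : Commute h t :=
    IsFreeGroup.commute_of_commute_pow two_ne_zero (commute_sq_of_conj_mem_zpowers ht1 h₁ h₂)
  obtain ⟨a, rfl⟩ := mem_zpowers_iff.mp ((ht g).mpr (Commute.refl g))
  exact (hht.zpow_right a).symm
end

section
/- Let F be a free group and let a, b ∈ F. If there exist nonzero integers m, n such that a^m = b^n and a^m ≠ 1, then a and b commute: ab = ba. -/
/-!
The centralizer `H` of `z = a ^ m` contains `a` and `b`, and by Nielsen–Schreier it is a free
group, in which `z` is a nontrivial central element. A free group on two or more generators has
trivial center, since the centralizer of a generator `x` is generated by `x`; so `H` has at most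
one generator and is commutative.
-/

namespace FreeGroup

open Subgroup

variable {β : Type*}

theorem mk_singleton_mem_zpowers_of (x : β) (c : Bool) : mk [(x, c)] ∈ zpowers (of x) := by
  cases c
  · exact inv_mem (mem_zpowers (of x))
  · exact mem_zpowers (of x)

/-- Induction on the length of the reduced word of `z`: a leading letter `x^±1` can be peeled off,
and any other leading letter makes `of x * z` a reduced word that `z * of x` cannot equal. -/
theorem mem_zpowers_of_of_commute {x : β} {z : FreeGroup β} (hz : Commute z (of x)) :
    z ∈ zpowers (of x) := by
  classical
  induction hn : z.toWord.length using Nat.strong_induction_on generalizing z with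
  | _ n ih =>
    rcases hw : z.toWord with _ | ⟨⟨y, b⟩, t⟩
    · rw [toWord_eq_nil_iff.mp hw]
      exact one_mem _
    by_cases hyx : y = x
    · subst hyx
      have hs := mk_singleton_mem_zpowers_of y (!b)
      have hcomm : Commute (mk [(y, !b)]) (of y) := by
        obtain ⟨k, hk⟩ := hs
        rw [← hk]
        exact (Commute.refl _).zpow_left k
      have hst : (mk [(y, !b)] * z).toWord = t := by
        rw [← mk_toWord (x := z), hw, mul_mk, toWord_mk, List.singleton_append,
          reduce.Step.eq Red.Step.cons_not_rev]
        exact ((hw ▸ isReduced_toWord).infix (List.suffix_cons _ t).isInfix).reduce_eq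
      exact (mul_mem_cancel_left hs).mp
        (ih t.length (by simp [← hn, hw]) (hcomm.mul_left hz) (by rw [hst]))
    · have hleft : (of x * z).toWord = (x, true) :: z.toWord := by
        rw [toWord_mul, toWord_of, List.singleton_append, hw]
        refine IsReduced.reduce_eq (isReduced_cons_cons.mpr ⟨fun h => absurd h.symm hyx, ?_⟩)
        exact hw ▸ isReduced_toWord
      have hsub := toWord_mul_sublist z (of x)
      rw [hz.eq, hleft, toWord_of] at hsub
      have hrot := hsub.eq_of_length (by simp)
      rw [hw] at hrot
      exact absurd (congrArg (·.head?.map Prod.fst) hrot).symm (by simpa using hyx)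

theorem disjoint_zpowers_of {x y : β} (hxy : x ≠ y) :
    Disjoint (zpowers (of x)) (zpowers (of y)) := by
  classical
  let φ : FreeGroup β →* Multiplicative ℤ := lift (Pi.mulSingle x (.ofAdd 1))
  rw [disjoint_def]
  rintro _ ⟨k, rfl⟩ ⟨j, hj⟩
  have hk : Multiplicative.ofAdd k = 1 := by
    simpa [φ, hxy.symm, ← ofAdd_zsmul] using congrArg φ hj.symm
  simp [ofAdd_eq_one.mp hk]

theorem center_eq_bot [Nontrivial β] : center (FreeGroup β) = ⊥ := by
  obtain ⟨x, y, hxy⟩ := exists_pair_ne β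
  refine eq_bot_iff.mpr fun z hz => disjoint_def.mp (disjoint_zpowers_of hxy) ?_ ?_
  · exact mem_zpowers_of_of_commute (mem_center_iff.mp hz (of x)).symm
  · exact mem_zpowers_of_of_commute (mem_center_iff.mp hz (of y)).symm

theorem commute_of_subsingleton [Subsingleton β] (g h : FreeGroup β) : Commute g h := by
  have := isMulCommutative_closure (k := Set.range (of : β → FreeGroup β)) fun u hu v hv => by
    obtain ⟨x, rfl⟩ := hu
    obtain ⟨y, rfl⟩ := hv
    rw [Subsingleton.elim x y]
  have hmem (u : FreeGroup β) : u ∈ closure (Set.range of) := closure_range_of β ▸ mem_top u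
  exact congrArg Subtype.val (mul_comm' ⟨g, hmem g⟩ ⟨h, hmem h⟩)

end FreeGroup

theorem IsFreeGroup.commute_of_center_ne_bot {G : Type*} [Group G] [IsFreeGroup G]
    (hG : Subgroup.center G ≠ ⊥) (g h : G) : Commute g h := by
  let e := IsFreeGroup.toFreeGroup G
  rcases subsingleton_or_nontrivial (IsFreeGroup.Generators G)
  · simpa using (FreeGroup.commute_of_subsingleton (e g) (e h)).map e.symm
  · refine absurd (eq_bot_iff.mpr fun z hz => e.injective ?_) hG
    have hez : e z ∈ Subgroup.center _ := MulEquivClass.apply_mem_center e hz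
    rwa [FreeGroup.center_eq_bot, Subgroup.mem_bot, ← map_one e] at hez

theorem stmt13_general {α : Type*} (a b : FreeGroup α) (m n : ℤ)
    (h : a ^ m = b ^ n) (hne : a ^ m ≠ 1) :
    a * b = b * a := by
  let H := Subgroup.centralizer {a ^ m}
  have ha : a ∈ H := Subgroup.mem_centralizer_singleton_iff.mpr ((Commute.refl a).zpow_right m).eq
  have hb : b ∈ H :=
    Subgroup.mem_centralizer_singleton_iff.mpr (h ▸ ((Commute.refl b).zpow_right n).eq)
  have hcenter : Subgroup.center H ≠ ⊥ := by
    have hzH : a ^ m ∈ H := Subgroup.mem_centralizer_singleton_iff.mpr rfl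
    have hz : (⟨a ^ m, hzH⟩ : H) ∈ Subgroup.center H := Subgroup.mem_center_iff.mpr fun g =>
      Subtype.ext (Subgroup.mem_centralizer_singleton_iff.mp g.2)
    exact fun hbot => hne (congrArg Subtype.val ((Subgroup.eq_bot_iff_forall _).mp hbot _ hz))
  exact congrArg Subtype.val (IsFreeGroup.commute_of_center_ne_bot hcenter ⟨a, ha⟩ ⟨b, hb⟩).eq

/-- In a free group, if `a` and `b` admit a common nontrivial power (`a ^ m = b ^ n ≠ 1`
for some nonzero integers `m, n`), then `a` and `b` commute. -/
theorem stmt13 {α : Type*} (a b : FreeGroup α) (m n : ℤ) (hm : m ≠ 0) (hn : n ≠ 0)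
    (h : a ^ m = b ^ n) (hne : a ^ m ≠ 1) :
    a * b = b * a :=
  stmt13_general a b m n h hne
end

section
/- Let G be a group and H ≤ G a subgroup of finite index n = [G : H]. If K₀ ⊊ K₁ ⊊ ⋯ ⊊ K_m is a strictly increasing chain of subgroups of G such that K_i ∩ H = K₀ ∩ H for every i, then m ≤ n − 1; equivalently, any such chain has at most n terms. -/
/-!
Put `L = K₀ ∩ H`. The relative index `[K : K ∩ H]` is at most `[G : H]`, since `K/(K ∩ H)` embeds
in `G/H`. Along the chain `K_i ∩ H = L`, and `[K_j : L] = [K_j : K_i] [K_i : L]` with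
`[K_j : K_i] ≥ 2` for `i < j`, so the `m + 1` numbers `[K_i : L]` strictly increase inside
`{1, …, [G : H]}`.
-/

theorem add_one_le_of_strictMono_of_pos {m n : ℕ} {f : Fin (m + 1) → ℕ} (hf : StrictMono f)
    (h0 : 0 < f 0) (hlast : f (Fin.last m) ≤ n) : m + 1 ≤ n := by
  have hmaps : ∀ i ∈ (Finset.univ : Finset (Fin (m + 1))), f i ∈ Finset.Icc 1 n := fun i _ =>
    Finset.mem_Icc.2
      ⟨h0.trans_le (hf.monotone (Fin.zero_le i)), (hf.monotone (Fin.le_last i)).trans hlast⟩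
  simpa using Finset.card_le_card_of_injOn f hmaps hf.injective.injOn

namespace Subgroup

variable {G : Type*} [Group G]

theorem relIndex_lt_relIndex_of_lt_of_inf_eq {H K L : Subgroup G} (hKL : K < L)
    (hinf : K ⊓ H = L ⊓ H) (hL : H.relIndex L ≠ 0) : H.relIndex K < H.relIndex L := by
  have hmul : H.relIndex K * K.relIndex L = H.relIndex L := by
    rw [← inf_relIndex_right H K, ← inf_relIndex_right H L, inf_comm H K,
      relIndex_mul_relIndex _ _ _ inf_le_left hKL.le, hinf, inf_comm]
  have hK : H.relIndex K ≠ 0 := mt (relIndex_eq_zero_of_le_right hKL.le) hL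
  have hKL_ne_one : K.relIndex L ≠ 1 := fun h => hKL.not_ge (relIndex_eq_one.1 h)
  have hKL_ne_zero : K.relIndex L ≠ 0 := right_ne_zero_of_mul (hmul ▸ hL)
  rw [← hmul]
  exact lt_mul_of_one_lt_right (Nat.pos_of_ne_zero hK) (by omega)

theorem relIndex_le_index (H K : Subgroup G) [H.FiniteIndex] : H.relIndex K ≤ H.index := by
  have hH : H.relIndex ⊤ ≠ 0 := H.relIndex_top_right ▸ FiniteIndex.index_ne_zero
  exact H.relIndex_top_right ▸ relIndex_le_of_le_right le_top hH

end Subgroup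

/-- Let `H` be a subgroup of finite index `n` in a group `G`. If `K₀ ⊊ K₁ ⊊ ⋯ ⊊ K_m` is
a strictly increasing chain of subgroups of `G` with `K_i ∩ H = K₀ ∩ H` for all `i`,
then `m ≤ n - 1`. -/
theorem stmt17 {G : Type*} [Group G] (H : Subgroup G) [H.FiniteIndex]
    (m : ℕ) (K : Fin (m + 1) → Subgroup G)
    (hmono : StrictMono K)
    (hint : ∀ i, K i ⊓ H = K 0 ⊓ H) :
    m ≤ H.index - 1 := by
  have hfin : ∀ i, H.relIndex (K i) ≠ 0 := fun i => Subgroup.FiniteIndex.index_ne_zero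
  have hrel : StrictMono fun i => H.relIndex (K i) := fun i j hij =>
    H.relIndex_lt_relIndex_of_lt_of_inf_eq (hmono hij) ((hint i).trans (hint j).symm) (hfin j)
  have := add_one_le_of_strictMono_of_pos hrel (Nat.pos_of_ne_zero (hfin 0))
    (H.relIndex_le_index (K (Fin.last m)))
  omega
end
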